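/- Let U be a normed space, β, ν ∈ (0,1), C > 0, and let ω : ℝ → U be continuous with ‖ω‖_{β,0,n} < ∞ for every n ∈ ℕ. Fix t > 0, set k := ‖ω‖_{β,0,t}, and let s* > 0 be the unique solution of C s + C (s^β + s^{1+β} + s^{β+ν}) k = 1/2. Then T(ω) ≥ min(s*, t). -/

import Mathlib

/-!
The function `T ↦ C T + C (T^β + T^{1+β} + T^{β+ν}) ‖ω‖_{β,0,T}` is strictly increasing on
`(0, ∞)`, because each power has a nonnegative exponent and the Hölder seminorm on `[0,T]` grows
with `T`. Below `min(s*, t)` it is therefore bounded strictly by its value with `s*` in place of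
`T` and `‖ω‖_{β,0,t}` in place of `‖ω‖_{β,0,T}`, which is `1/2`; so no element of the set defining
`T(ω)` lies below `min(s*, t)`.
-/

/-- The `β`-Hölder seminorm of `ω : ℝ → U` on the interval `[a,b]`:
`sSup { ‖ω t − ω s‖ / (t−s)^β : a ≤ s < t ≤ b }`. -/
noncomputable def holderNorm {U : Type*} [NormedAddCommGroup U] (β a b : ℝ) (ω : ℝ → U) : ℝ :=
  sSup {x : ℝ | ∃ s t : ℝ, a ≤ s ∧ s < t ∧ t ≤ b ∧ x = ‖ω t - ω s‖ / (t - s) ^ β}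

/-- `T(ω) = inf { T > 0 : C T + C (T^β + T^{1+β} + T^{β+ν}) ‖ω‖_{β,0,T} ≥ 1/2 }`. -/
noncomputable def TTime {U : Type*} [NormedAddCommGroup U] (C β ν : ℝ) (ω : ℝ → U) : ℝ :=
  sInf {T : ℝ | 0 < T ∧
    1 / 2 ≤ C * T + C * (T ^ β + T ^ (1 + β) + T ^ (β + ν)) * holderNorm β 0 T ω}

section HolderNorm

variable {U : Type*} [NormedAddCommGroup U]

def holderQuotients (β a b : ℝ) (ω : ℝ → U) : Set ℝ :=
  {x : ℝ | ∃ s t : ℝ, a ≤ s ∧ s < t ∧ t ≤ b ∧ x = ‖ω t - ω s‖ / (t - s) ^ β}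

theorem holderQuotients_mono {β a b b' : ℝ} {ω : ℝ → U} (hb : b ≤ b') :
    holderQuotients β a b ω ⊆ holderQuotients β a b' ω := by
  rintro x ⟨s, t, has, hst, htb, rfl⟩
  exact ⟨s, t, has, hst, htb.trans hb, rfl⟩

theorem holderNorm_nonneg (β a b : ℝ) (ω : ℝ → U) : 0 ≤ holderNorm β a b ω := by
  refine Real.sSup_nonneg fun x ⟨s, t, _, hst, _, hx⟩ => hx ▸ ?_
  have : 0 < (t - s) ^ β := Real.rpow_pos_of_pos (sub_pos.mpr hst) β
  positivity

theorem holderNorm_mono_right {β a b b' : ℝ} {ω : ℝ → U}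
    (hbdd : BddAbove (holderQuotients β a b' ω)) (hab : a < b) (hb : b ≤ b') :
    holderNorm β a b ω ≤ holderNorm β a b' ω :=
  csSup_le_csSup hbdd ⟨_, a, b, le_rfl, hab, le_rfl, rfl⟩ (holderQuotients_mono hb)

end HolderNorm

noncomputable def timeFunctional (C β ν T k : ℝ) : ℝ :=
  C * T + C * (T ^ β + T ^ (1 + β) + T ^ (β + ν)) * k

theorem TTime_eq_sInf {U : Type*} [NormedAddCommGroup U] (C β ν : ℝ) (ω : ℝ → U) :
    TTime C β ν ω = sInf {T : ℝ | 0 < T ∧ 1 / 2 ≤ timeFunctional C β ν T (holderNorm β 0 T ω)} :=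
  rfl

theorem rpow_sum_nonneg {T : ℝ} (β ν : ℝ) (hT : 0 ≤ T) :
    0 ≤ T ^ β + T ^ (1 + β) + T ^ (β + ν) := by
  have := Real.rpow_nonneg hT β
  have := Real.rpow_nonneg hT (1 + β)
  have := Real.rpow_nonneg hT (β + ν)
  positivity

theorem mul_le_timeFunctional {C β ν T k : ℝ} (hC : 0 ≤ C) (hT : 0 ≤ T) (hk : 0 ≤ k) :
    C * T ≤ timeFunctional C β ν T k :=
  le_add_of_nonneg_right (mul_nonneg (mul_nonneg hC (rpow_sum_nonneg β ν hT)) hk)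

theorem timeFunctional_lt_timeFunctional {C β ν T s k K : ℝ} (hC : 0 < C) (hβ : 0 ≤ β)
    (hν : 0 ≤ ν) (hT : 0 ≤ T) (hTs : T < s) (hk : 0 ≤ k) (hkK : k ≤ K) :
    timeFunctional C β ν T k < timeFunctional C β ν s K := by
  have hpow : T ^ β + T ^ (1 + β) + T ^ (β + ν) ≤ s ^ β + s ^ (1 + β) + s ^ (β + ν) := by
    gcongr
  have hs_pow := (rpow_sum_nonneg β ν hT).trans hpow
  exact add_lt_add_of_lt_of_le (mul_lt_mul_of_pos_left hTs hC)
    (mul_le_mul (mul_le_mul_of_nonneg_left hpow hC.le) hkK hk (mul_nonneg hC.le hs_pow))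

/-- The witness `T = 1/(2C)` keeps the infimum away from the junk value `sInf ∅ = 0`. -/
theorem le_TTime {U : Type*} [NormedAddCommGroup U] {C β ν r : ℝ} {ω : ℝ → U} (hC : 0 < C)
    (h : ∀ T, 0 < T → T < r → timeFunctional C β ν T (holderNorm β 0 T ω) < 1 / 2) :
    r ≤ TTime C β ν ω := by
  rw [TTime_eq_sInf]
  refine le_csInf ⟨1 / (2 * C), by positivity, ?_⟩ fun T ⟨hT, hT_ge⟩ => ?_
  · calc (1 : ℝ) / 2 = C * (1 / (2 * C)) := by field_simp
      _ ≤ _ := mul_le_timeFunctional hC.le (by positivity) (holderNorm_nonneg β 0 _ ω)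
  · by_contra! hTr
    exact (h T hT hTr).not_ge hT_ge

theorem TTime_ge_min_general
    {U : Type*} [NormedAddCommGroup U]
    (β ν C : ℝ) (hβ : β ∈ Set.Ioo (0 : ℝ) 1) (hν : ν ∈ Set.Ioo (0 : ℝ) 1) (hC : 0 < C)
    (ω : ℝ → U)
    (hfin : ∀ n : ℕ,
      BddAbove {x : ℝ | ∃ s t : ℝ, 0 ≤ s ∧ s < t ∧ t ≤ (n : ℝ) ∧
        x = ‖ω t - ω s‖ / (t - s) ^ β})
    (t : ℝ) (s : ℝ)
    (heq : C * s + C * (s ^ β + s ^ (1 + β) + s ^ (β + ν)) * holderNorm β 0 t ω = 1 / 2) :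
    min s t ≤ TTime C β ν ω := by
  refine le_TTime hC fun T hT hTst => ?_
  obtain ⟨hTs, hTt⟩ := lt_min_iff.mp hTst
  have hbdd : BddAbove (holderQuotients β 0 t ω) :=
    (hfin ⌈t⌉₊).mono (holderQuotients_mono (Nat.le_ceil t))
  have hnorm : holderNorm β 0 T ω ≤ holderNorm β 0 t ω :=
    holderNorm_mono_right hbdd hT hTt.le
  calc timeFunctional C β ν T (holderNorm β 0 T ω)
      < timeFunctional C β ν s (holderNorm β 0 t ω) :=
        timeFunctional_lt_timeFunctional hC hβ.1.le hν.1.le hT.le hTs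
          (holderNorm_nonneg β 0 T ω) hnorm
    _ = 1 / 2 := heq

/-- If `k = ‖ω‖_{β,0,t}` and `s* > 0` solves
`C s + C (s^β + s^{1+β} + s^{β+ν}) k = 1/2`, then `T(ω) ≥ min(s*, t)`. -/
theorem TTime_ge_min
    {U : Type*} [NormedAddCommGroup U] [NormedSpace ℝ U]
    (β ν C : ℝ) (hβ : β ∈ Set.Ioo (0 : ℝ) 1) (hν : ν ∈ Set.Ioo (0 : ℝ) 1) (hC : 0 < C)
    (ω : ℝ → U) (hcont : Continuous ω)
    (hfin : ∀ n : ℕ,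
      BddAbove {x : ℝ | ∃ s t : ℝ, 0 ≤ s ∧ s < t ∧ t ≤ (n : ℝ) ∧
        x = ‖ω t - ω s‖ / (t - s) ^ β})
    (t : ℝ) (ht : 0 < t) (s : ℝ) (hs : 0 < s)
    (heq : C * s + C * (s ^ β + s ^ (1 + β) + s ^ (β + ν)) * holderNorm β 0 t ω = 1 / 2) :
    min s t ≤ TTime C β ν ω :=
  TTime_ge_min_general β ν C hβ hν hC ω hfin t s heq
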